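/- (Theorem 2) Let e, r : ℝ → ℝ be differentiable, β > 0, z₂(t) = (e(t), r(t)) ∈ ℝ², and let J be a constant with c_j ≤ J ≤ c_J (0 < c_j ≤ c_J). Suppose B : ℝ → ℝ satisfies B̲ₙ ≤ B(t) ≤ B̄ₙ with B̲ₙ > 0, χ : ℝ → ℝ satisfies |χ(t)| ≤ c₁ + c₂‖z₂(t)‖ with c₁, c₂ ≥ 0, and the closed-loop equations e'(t) = r(t) − β e(t) and J r'(t) = χ(t) − e(t) − B(t)(k₂ r(t) + (k₃ + k₄‖z₂(t)‖) sign(r(t))) hold, where the gains satisfy k₂ > 0, k₃ ≥ c₁/B̲ₙ, k₄ ≥ c₂/B̲ₙ. Then the motor synchronization error converges exponentially: for all t ≥ t₀, ‖z₂(t)‖ ≤ √(b_ϱ/a_ϱ) · e^{−(λ_ϱ/2)(t − t₀)} ‖z₂(t₀)‖, where a_ϱ = min(1/2, c_j/2), b_ϱ = max(1/2, c_J/2), and λ_ϱ = min(β, B̲ₙ k₂)/b_ϱ. -/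

import Mathlib

/-- The stacked vector `z₂ = (e, r) ∈ ℝ²` with `‖z₂‖² = e² + r²`. -/
noncomputable def stack2 (x y : ℝ) : WithLp 2 (ℝ × ℝ) :=
  (WithLp.equiv 2 _).symm (x, y)

/-!
The energy `V = ½e² + ½Jr²` is squeezed between `a_ϱ‖z₂‖²` and `b_ϱ‖z₂‖²`. Along the closed loop
the cross terms `±e r` cancel in `V'`, and the gains `k₃, k₄` make the discontinuous feedback
dominate the disturbance `χ r`, so `V' ≤ -β e² - B̲ₙ k₂ r² ≤ -λ_ϱ V`. Grönwall gives
`V(t) ≤ e^{-λ_ϱ (t - t₀)} V(t₀)`, and the sandwich converts this back into a bound on `‖z₂‖`.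
-/

open Real

lemma stack2_norm_sq (x y : ℝ) : ‖stack2 x y‖ ^ 2 = x ^ 2 + y ^ 2 := by
  rw [WithLp.prod_norm_eq_of_L2, Real.sq_sqrt (by positivity)]
  simp [stack2]

lemma Real.self_mul_sign (x : ℝ) : x * Real.sign x = |x| := by
  rcases lt_trichotomy x 0 with h | rfl | h
  · rw [Real.sign_of_neg h, abs_of_neg h, mul_neg_one]
  · simp
  · rw [Real.sign_of_pos h, abs_of_pos h, mul_one]

lemma le_mul_exp_of_hasDerivAt_le_neg_mul {V V' : ℝ → ℝ} {l t₀ t : ℝ}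
    (hV : ∀ s, HasDerivAt V (V' s) s) (hdecay : ∀ s, V' s ≤ -l * V s) (ht : t₀ ≤ t) :
    V t ≤ V t₀ * exp (-l * (t - t₀)) := by
  have hcont : ContinuousOn V (Set.Icc t₀ t) :=
    fun s _ => (hV s).continuousAt.continuousWithinAt
  have := le_gronwallBound_of_liminf_deriv_right_le hcont
    (fun s _ _ hr => (hV s).hasDerivWithinAt.liminf_right_slope_le hr) le_rfl
    (fun s _ => (hdecay s).trans_eq (add_zero _).symm) t ⟨ht, le_rfl⟩
  rwa [gronwallBound_ε0] at this

theorem norm_le_sqrt_mul_exp_of_lyapunov {E : Type*} [SeminormedAddCommGroup E]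
    {z : ℝ → E} {V V' : ℝ → ℝ} {a b l t₀ t : ℝ} (ha : 0 < a)
    (hV : ∀ s, HasDerivAt V (V' s) s) (hdecay : ∀ s, V' s ≤ -l * V s)
    (hlow : ∀ s, a * ‖z s‖ ^ 2 ≤ V s) (hhigh : ∀ s, V s ≤ b * ‖z s‖ ^ 2) (ht : t₀ ≤ t) :
    ‖z t‖ ≤ √(b / a) * exp (-(l / 2) * (t - t₀)) * ‖z t₀‖ := by
  have hsq : ‖z t‖ ^ 2 ≤ b / a * (exp (-l * (t - t₀)) * ‖z t₀‖ ^ 2) := by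
    rw [div_mul_eq_mul_div, le_div_iff₀' ha]
    calc a * ‖z t‖ ^ 2 ≤ V t := hlow t
      _ ≤ V t₀ * exp (-l * (t - t₀)) := le_mul_exp_of_hasDerivAt_le_neg_mul hV hdecay ht
      _ ≤ b * ‖z t₀‖ ^ 2 * exp (-l * (t - t₀)) := by gcongr; exact hhigh t₀
      _ = b * (exp (-l * (t - t₀)) * ‖z t₀‖ ^ 2) := by ring
  calc ‖z t‖ = √(‖z t‖ ^ 2) := (Real.sqrt_sq (norm_nonneg _)).symm
    _ ≤ √(b / a * (exp (-l * (t - t₀)) * ‖z t₀‖ ^ 2)) := Real.sqrt_le_sqrt hsq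
    _ = √(b / a) * exp (-(l / 2) * (t - t₀)) * ‖z t₀‖ := by
      rw [Real.sqrt_mul' _ (by positivity), Real.sqrt_mul' _ (by positivity),
        Real.sqrt_sq (norm_nonneg _), ← Real.exp_half, mul_assoc]
      ring_nf

section MotorLoop

variable {e r χ B Blo β k₂ K : ℝ}

lemma gain_bound_of_div_le {c₁ c₂ k₃ k₄ n : ℝ} (hBlo : 0 < Blo) (hn : 0 ≤ n)
    (hk₃ : c₁ / Blo ≤ k₃) (hk₄ : c₂ / Blo ≤ k₄) : c₁ + c₂ * n ≤ Blo * (k₃ + k₄ * n) := by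
  rw [div_le_iff₀' hBlo] at hk₃ hk₄
  nlinarith

lemma mul_le_robust_term (hBlo : 0 < Blo) (hB : Blo ≤ B) (hχ : |χ| ≤ Blo * K) :
    χ * r ≤ B * K * |r| := by
  have hK : 0 ≤ K := nonneg_of_mul_nonneg_right ((abs_nonneg χ).trans hχ) hBlo
  calc χ * r ≤ |χ| * |r| := (le_abs_self _).trans_eq (abs_mul _ _)
    _ ≤ Blo * K * |r| := by gcongr
    _ ≤ B * K * |r| := by gcongr

lemma closedLoop_energy_deriv_le (hBlo : 0 < Blo) (hB : Blo ≤ B) (hk₂ : 0 ≤ k₂)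
    (hχ : |χ| ≤ Blo * K) :
    e * (r - β * e) + r * (χ - e - B * (k₂ * r + K * Real.sign r))
      ≤ -(β * e ^ 2 + Blo * k₂ * r ^ 2) := by
  have hrobust := mul_le_robust_term (r := r) hBlo hB hχ
  have hdamp : Blo * k₂ * r ^ 2 ≤ B * k₂ * r ^ 2 := by gcongr
  have hexpand : e * (r - β * e) + r * (χ - e - B * (k₂ * r + K * Real.sign r))
      = -β * e ^ 2 - B * k₂ * r ^ 2 + (χ * r - B * K * (r * Real.sign r)) := by ring
  rw [hexpand, Real.self_mul_sign]
  linarith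

end MotorLoop

section Energy

variable {J c_j c_J : ℝ} (x y : ℝ)

lemma min_mul_le_energy (hJ : c_j ≤ J) :
    min (1 / 2) (c_j / 2) * (x ^ 2 + y ^ 2) ≤ 1 / 2 * x ^ 2 + 1 / 2 * J * y ^ 2 := by
  have h₁ := min_le_left (1 / 2 : ℝ) (c_j / 2)
  have h₂ := min_le_right (1 / 2 : ℝ) (c_j / 2)
  nlinarith [sq_nonneg x, sq_nonneg y]

lemma energy_le_max_mul (hJ : J ≤ c_J) :
    1 / 2 * x ^ 2 + 1 / 2 * J * y ^ 2 ≤ max (1 / 2) (c_J / 2) * (x ^ 2 + y ^ 2) := by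
  have h₁ := le_max_left (1 / 2 : ℝ) (c_J / 2)
  have h₂ := le_max_right (1 / 2 : ℝ) (c_J / 2)
  nlinarith [sq_nonneg x, sq_nonneg y]

lemma min_div_max_mul_energy_le {β κ : ℝ} (hβ : 0 ≤ β) (hκ : 0 ≤ κ) (hJ : J ≤ c_J) :
    min β κ / max (1 / 2) (c_J / 2) * (1 / 2 * x ^ 2 + 1 / 2 * J * y ^ 2)
      ≤ β * x ^ 2 + κ * y ^ 2 := by
  have hb : 0 < max (1 / 2 : ℝ) (c_J / 2) := lt_max_of_lt_left (by norm_num)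
  have hm : 0 ≤ min β κ := le_min hβ hκ
  have hmin : min β κ * (x ^ 2 + y ^ 2) ≤ β * x ^ 2 + κ * y ^ 2 := by
    nlinarith [min_le_left β κ, min_le_right β κ, sq_nonneg x, sq_nonneg y]
  rw [div_mul_eq_mul_div, div_le_iff₀ hb]
  nlinarith [mul_le_mul_of_nonneg_left (energy_le_max_mul x y hJ) hm,
    mul_le_mul_of_nonneg_left hmin hb.le]

end Energy

theorem stmt12_general
    (e r ed rd : ℝ → ℝ)
    (he : ∀ t, HasDerivAt e (ed t) t) (hr : ∀ t, HasDerivAt r (rd t) t)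
    (β : ℝ) (hβ : 0 < β)
    (z₂ : ℝ → WithLp 2 (ℝ × ℝ)) (hz₂ : z₂ = fun t => stack2 (e t) (r t))
    (J c_j c_J : ℝ) (hc_j : 0 < c_j)
    (hJlow : c_j ≤ J) (hJhigh : J ≤ c_J)
    (B : ℝ → ℝ) (Blo Bhi : ℝ) (hBlo : 0 < Blo)
    (hB : ∀ t, Blo ≤ B t ∧ B t ≤ Bhi)
    (χ : ℝ → ℝ) (c₁ c₂ : ℝ)
    (hχ : ∀ t, |χ t| ≤ c₁ + c₂ * ‖z₂ t‖)
    (k₂ k₃ k₄ : ℝ) (hk₂ : 0 < k₂) (hk₃ : c₁ / Blo ≤ k₃) (hk₄ : c₂ / Blo ≤ k₄)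
    (hloop₁ : ∀ t, ed t = r t - β * e t)
    (hloop₂ : ∀ t, J * rd t
      = χ t - e t - B t * (k₂ * r t + (k₃ + k₄ * ‖z₂ t‖) * Real.sign (r t)))
    (a_ϱ b_ϱ lam_ϱ : ℝ) (ha : a_ϱ = min (1 / 2) (c_j / 2)) (hb : b_ϱ = max (1 / 2) (c_J / 2))
    (hlam : lam_ϱ = min β (Blo * k₂) / b_ϱ) :
    ∀ t₀ t : ℝ, t₀ ≤ t →
      ‖z₂ t‖ ≤ Real.sqrt (b_ϱ / a_ϱ) * Real.exp (-(lam_ϱ / 2) * (t - t₀)) * ‖z₂ t₀‖ := by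
  intro t₀ t ht
  subst ha hb hlam
  have hnorm : ∀ s, ‖z₂ s‖ ^ 2 = e s ^ 2 + r s ^ 2 := fun s => hz₂ ▸ stack2_norm_sq _ _
  refine norm_le_sqrt_mul_exp_of_lyapunov (by positivity)
    (V := fun s => 1 / 2 * e s ^ 2 + 1 / 2 * J * r s ^ 2)
    (V' := fun s => e s * ed s + r s * (J * rd s)) (fun s => ?_) (fun s => ?_)
    (fun s => (hnorm s).symm ▸ min_mul_le_energy (e s) (r s) hJlow)
    (fun s => (hnorm s).symm ▸ energy_le_max_mul (e s) (r s) hJhigh) ht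
  · exact ((((he s).pow 2).const_mul (1 / 2)).add
      (((hr s).pow 2).const_mul (1 / 2 * J))).congr_deriv (by ring)
  · have hgain := (hχ s).trans (gain_bound_of_div_le hBlo (norm_nonneg _) hk₃ hk₄)
    have hV' := closedLoop_energy_deriv_le (e := e s) (r := r s) (β := β)
      hBlo (hB s).1 hk₂.le hgain
    rw [← hloop₁ s, ← hloop₂ s] at hV'
    have hrate := min_div_max_mul_energy_le (e s) (r s) hβ.le
      (mul_pos hBlo hk₂).le hJhigh
    linarith

/-- Theorem 2: exponential convergence of the motor synchronization
error: `‖z₂(t)‖ ≤ √(b_ϱ/a_ϱ) e^{−(lam_ϱ/2)(t − t₀)} ‖z₂(t₀)‖` for all `t ≥ t₀`. -/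
theorem stmt12
    (e r ed rd : ℝ → ℝ)
    (he : ∀ t, HasDerivAt e (ed t) t) (hr : ∀ t, HasDerivAt r (rd t) t)
    (β : ℝ) (hβ : 0 < β)
    (z₂ : ℝ → WithLp 2 (ℝ × ℝ)) (hz₂ : z₂ = fun t => stack2 (e t) (r t))
    (J c_j c_J : ℝ) (hc_j : 0 < c_j) (hc_jJ : c_j ≤ c_J)
    (hJlow : c_j ≤ J) (hJhigh : J ≤ c_J)
    (B : ℝ → ℝ) (Blo Bhi : ℝ) (hBlo : 0 < Blo)
    (hB : ∀ t, Blo ≤ B t ∧ B t ≤ Bhi)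
    (χ : ℝ → ℝ) (c₁ c₂ : ℝ) (hc₁ : 0 ≤ c₁) (hc₂ : 0 ≤ c₂)
    (hχ : ∀ t, |χ t| ≤ c₁ + c₂ * ‖z₂ t‖)
    (k₂ k₃ k₄ : ℝ) (hk₂ : 0 < k₂) (hk₃ : c₁ / Blo ≤ k₃) (hk₄ : c₂ / Blo ≤ k₄)
    (hloop₁ : ∀ t, ed t = r t - β * e t)
    (hloop₂ : ∀ t, J * rd t
      = χ t - e t - B t * (k₂ * r t + (k₃ + k₄ * ‖z₂ t‖) * Real.sign (r t)))
    (a_ϱ b_ϱ lam_ϱ : ℝ) (ha : a_ϱ = min (1 / 2) (c_j / 2)) (hb : b_ϱ = max (1 / 2) (c_J / 2))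
    (hlam : lam_ϱ = min β (Blo * k₂) / b_ϱ) :
    ∀ t₀ t : ℝ, t₀ ≤ t →
      ‖z₂ t‖ ≤ Real.sqrt (b_ϱ / a_ϱ) * Real.exp (-(lam_ϱ / 2) * (t - t₀)) * ‖z₂ t₀‖ :=
  stmt12_general e r ed rd he hr β hβ z₂ hz₂ J c_j c_J hc_j hJlow hJhigh B Blo Bhi hBlo hB χ c₁ c₂
    hχ k₂ k₃ k₄ hk₂ hk₃ hk₄ hloop₁ hloop₂ a_ϱ b_ϱ lam_ϱ ha hb hlam
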